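/- (Cigler's q-Fibonacci formula) Define F_n(x,s,q) by F_0 = 0, F_1 = 1, and F_n = x F_{n-1} + s q^{n-3} F_{n-2} for n ≥ 2. Then for all n ≥ 1, F_n(x,s,q) = ∑_{k=0}^{n-1} q^{k(k-1)} s^k x^{n-2k-1} C(n-k-1, k)_q. -/

import Mathlib

open Finset

/-- q-Pochhammer symbol (a;q)_n. -/
noncomputable def qPoch {K : Type*} [Field K] (q a : K) (n : ℕ) : K :=
  ∏ j ∈ Finset.range n, (1 - a * q ^ j)

/-- Gaussian (q-)binomial coefficient. -/
noncomputable def qbinom {K : Type*} [Field K] (q : K) (n k : ℕ) : K :=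
  if k ≤ n then qPoch q q n / (qPoch q q k * qPoch q q (n - k)) else 0

/-! The sum satisfies the recurrence of `F` with the same initial values. After splitting off the
term `k = 0` and shifting `k`, the recurrence reduces termwise to the q-Pascal rule
`C(m+1, k+1) = C(m, k+1) + q^(m-k) C(m, k)`, which holds because the indeterminate `q` is not a
root of unity, so that no q-factorial vanishes. -/

section

variable {K : Type*} [Field K] {q s x : K}

lemma qPoch_succ (q a : K) (n : ℕ) : qPoch q a (n + 1) = qPoch q a n * (1 - a * q ^ n) :=
  prod_range_succ _ n

lemma one_sub_mul_pow_ne_zero (hq : ¬IsOfFinOrder q) (j : ℕ) : 1 - q * q ^ j ≠ 0 := fun h =>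
  hq <| isOfFinOrder_iff_pow_eq_one.2 ⟨j + 1, j.succ_pos, by rw [pow_succ']; linear_combination -h⟩

lemma qPoch_self_ne_zero (hq : ¬IsOfFinOrder q) (n : ℕ) : qPoch q q n ≠ 0 :=
  prod_ne_zero_iff.2 fun j _ => one_sub_mul_pow_ne_zero hq j

lemma qPoch_zero (q a : K) : qPoch q a 0 = 1 :=
  prod_range_zero _

lemma qbinom_of_lt (q : K) {n k : ℕ} (h : n < k) : qbinom q n k = 0 :=
  if_neg h.not_ge

lemma qbinom_eq_div (q : K) {n k d : ℕ} (h : n = k + d) :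
    qbinom q n k = qPoch q q n / (qPoch q q k * qPoch q q d) := by
  rw [qbinom, if_pos (by omega), show n - k = d by omega]

lemma qbinom_zero_right (hq : ¬IsOfFinOrder q) (n : ℕ) : qbinom q n 0 = 1 := by
  rw [qbinom_eq_div q (zero_add n).symm, qPoch_zero, one_mul, div_self (qPoch_self_ne_zero hq n)]

lemma qbinom_self (hq : ¬IsOfFinOrder q) (n : ℕ) : qbinom q n n = 1 := by
  rw [qbinom_eq_div q (add_zero n).symm, qPoch_zero, mul_one, div_self (qPoch_self_ne_zero hq n)]

lemma qbinom_succ_succ (hq : ¬IsOfFinOrder q) (n k : ℕ) :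
    qbinom q (n + 1) (k + 1) = qbinom q n (k + 1) + q ^ (n - k) * qbinom q n k := by
  rcases lt_trichotomy k n with hkn | rfl | hnk
  · obtain ⟨d, rfl⟩ := Nat.exists_eq_add_of_lt hkn
    rw [qbinom_eq_div q (k := k + 1) (d := d + 1) (by omega),
      qbinom_eq_div q (k := k + 1) (d := d) (by omega),
      qbinom_eq_div q (k := k) (d := d + 1) (by omega), show k + d + 1 - k = d + 1 by omega,
      qPoch_succ, qPoch_succ q q (k + d), qPoch_succ q q k, qPoch_succ q q d]
    have := one_sub_mul_pow_ne_zero hq k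
    have := one_sub_mul_pow_ne_zero hq d
    have := qPoch_self_ne_zero hq k
    have := qPoch_self_ne_zero hq d
    field_simp
    ring
  · rw [qbinom_self hq, qbinom_self hq, qbinom_of_lt q k.lt_succ_self, Nat.sub_self]
    ring
  · rw [qbinom_of_lt q (by omega), qbinom_of_lt q (by omega), qbinom_of_lt q hnk]
    ring

noncomputable def qFibTerm (q s x : K) (n k : ℕ) : K :=
  q ^ (k * (k - 1)) * s ^ k * x ^ ((n : ℤ) - 2 * k - 1) * qbinom q (n - k - 1) k

lemma qFibTerm_zero_right (hq : ¬IsOfFinOrder q) (n : ℕ) :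
    qFibTerm q s x n 0 = x ^ ((n : ℤ) - 1) := by
  simp [qFibTerm, qbinom_zero_right hq]

lemma qFibTerm_eq_zero {n k : ℕ} (h : n - k - 1 < k) : qFibTerm q s x n k = 0 := by
  rw [qFibTerm, qbinom_of_lt q h, mul_zero]

lemma qFibTerm_add_three (hq : ¬IsOfFinOrder q) (hx : x ≠ 0) (n k : ℕ) :
    qFibTerm q s x (n + 3) (k + 1) =
      x * qFibTerm q s x (n + 2) (k + 1) + s * q ^ n * qFibTerm q s x (n + 1) k := by
  rcases le_or_gt (2 * k) n with hkn | hnk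
  · obtain ⟨d, rfl⟩ := Nat.exists_eq_add_of_le hkn
    have hexp : q ^ (2 * k + d) * q ^ (k * (k - 1)) = q ^ ((k + 1) * k) * q ^ d := by
      rw [← pow_add, ← pow_add]
      congr 1
      rcases k with _ | k
      · ring
      · rw [Nat.add_sub_cancel]; ring
    simp only [qFibTerm]
    rw [show 2 * k + d + 3 - (k + 1) - 1 = k + d + 1 by omega,
      show 2 * k + d + 2 - (k + 1) - 1 = k + d by omega,
      show 2 * k + d + 1 - k - 1 = k + d by omega, qbinom_succ_succ hq, Nat.add_sub_cancel_left]
    push_cast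
    rw [show 2 * (k : ℤ) + d + 3 - 2 * (k + 1) - 1 = d - 1 + 1 by ring,
      show 2 * (k : ℤ) + d + 2 - 2 * (k + 1) - 1 = d - 1 by ring,
      show 2 * (k : ℤ) + d + 1 - 2 * k - 1 = d - 1 + 1 by ring, zpow_add_one₀ hx]
    linear_combination (-s ^ (k + 1) * x ^ ((d : ℤ) - 1) * x * qbinom q (k + d) k) * hexp
  · rw [qFibTerm_eq_zero (by omega), qFibTerm_eq_zero (by omega), qFibTerm_eq_zero (by omega)]
    ring

lemma sum_qFibTerm_add_three (hq : ¬IsOfFinOrder q) (hx : x ≠ 0) (n : ℕ) :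
    ∑ k ∈ range (n + 3), qFibTerm q s x (n + 3) k =
      x * ∑ k ∈ range (n + 2), qFibTerm q s x (n + 2) k +
        s * q ^ n * ∑ k ∈ range (n + 1), qFibTerm q s x (n + 1) k := by
  have hlead : qFibTerm q s x (n + 3) 0 = x * qFibTerm q s x (n + 2) 0 := by
    rw [qFibTerm_zero_right hq, qFibTerm_zero_right hq, ← zpow_one_add₀ hx]
    congr 1
    push_cast
    ring
  rw [sum_range_succ' _ (n + 2), sum_range_succ _ (n + 1), sum_range_succ' _ (n + 1),
    qFibTerm_eq_zero (by omega), hlead]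
  simp only [qFibTerm_add_three hq hx, sum_add_distrib, mul_add, mul_sum]
  ring

theorem eq_sum_qFibTerm {F : ℕ → K} (hx : x ≠ 0) (hq : ¬IsOfFinOrder q)
    (hF0 : F 0 = 0) (hF1 : F 1 = 1)
    (hF : ∀ n : ℕ, 2 ≤ n → F n = x * F (n - 1) + s * q ^ ((n : ℤ) - 3) * F (n - 2))
    (n : ℕ) (hn : 1 ≤ n) : F n = ∑ k ∈ range n, qFibTerm q s x n k := by
  obtain ⟨m, rfl⟩ := Nat.exists_eq_add_of_le' hn
  induction m using Nat.twoStepInduction with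
  | zero => simp [hF1, qFibTerm_zero_right hq]
  | one =>
    rw [hF 2 le_rfl, sum_range_succ, sum_range_one, qFibTerm_zero_right hq,
      qFibTerm_eq_zero (by norm_num)]
    simp [hF0, hF1]
  | more m ih₀ ih₁ =>
    rw [hF (m + 3) (by omega), show m + 3 - 1 = m + 2 from rfl, show m + 3 - 2 = m + 1 from rfl,
      show ((m + 3 : ℕ) : ℤ) - 3 = m by push_cast; ring, zpow_natCast,
      ih₀ le_add_self, ih₁ le_add_self, sum_qFibTerm_add_three hq hx]

end

lemma MvPolynomial.not_isOfFinOrder_X {σ R : Type*} [CommSemiring R] [Nontrivial R] (i : σ) :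
    ¬IsOfFinOrder (X i : MvPolynomial σ R) := by
  rw [isOfFinOrder_iff_pow_eq_one]
  rintro ⟨n, hn, h⟩
  simpa [hn.ne'] using congrArg totalDegree h

theorem cigler_q_fibonacci_general (F : ℕ → FractionRing (MvPolynomial (Fin 3) ℚ))
    (x s q : FractionRing (MvPolynomial (Fin 3) ℚ))
    (hx : x = algebraMap (MvPolynomial (Fin 3) ℚ) _ (MvPolynomial.X 0))
    (hq : q = algebraMap (MvPolynomial (Fin 3) ℚ) _ (MvPolynomial.X 2))
    (hF0 : F 0 = 0) (hF1 : F 1 = 1)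
    (hF : ∀ n : ℕ, 2 ≤ n → F n = x * F (n - 1) + s * q ^ ((n : ℤ) - 3) * F (n - 2)) :
    ∀ n : ℕ, 1 ≤ n →
      F n = ∑ k ∈ Finset.range n,
        q ^ (k * (k - 1)) * s ^ k * x ^ ((n : ℤ) - 2 * k - 1) * qbinom q (n - k - 1) k := by
  have hinj := IsFractionRing.injective (MvPolynomial (Fin 3) ℚ)
    (FractionRing (MvPolynomial (Fin 3) ℚ))
  have hx₀ : x ≠ 0 := hx ▸ (map_ne_zero_iff _ hinj).2 (MvPolynomial.X_ne_zero 0)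
  have hq₀ : ¬IsOfFinOrder q := hq ▸ mt (Function.Injective.isOfFinOrder_iff
    (f := (algebraMap _ _).toMonoidHom) hinj).1 (MvPolynomial.not_isOfFinOrder_X 2)
  exact eq_sum_qFibTerm hx₀ hq₀ hF0 hF1 hF

/-- Cigler's q-Fibonacci formula, with x = X 0, s = X 1, q = X 2 indeterminates. -/
theorem cigler_q_fibonacci (F : ℕ → FractionRing (MvPolynomial (Fin 3) ℚ))
    (x s q : FractionRing (MvPolynomial (Fin 3) ℚ))
    (hx : x = algebraMap (MvPolynomial (Fin 3) ℚ) _ (MvPolynomial.X 0))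
    (hs : s = algebraMap (MvPolynomial (Fin 3) ℚ) _ (MvPolynomial.X 1))
    (hq : q = algebraMap (MvPolynomial (Fin 3) ℚ) _ (MvPolynomial.X 2))
    (hF0 : F 0 = 0) (hF1 : F 1 = 1)
    (hF : ∀ n : ℕ, 2 ≤ n → F n = x * F (n - 1) + s * q ^ ((n : ℤ) - 3) * F (n - 2)) :
    ∀ n : ℕ, 1 ≤ n →
      F n = ∑ k ∈ Finset.range n,
        q ^ (k * (k - 1)) * s ^ k * x ^ ((n : ℤ) - 2 * k - 1) * qbinom q (n - k - 1) k :=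
  cigler_q_fibonacci_general F x s q hx hq hF0 hF1 hF
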